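/- For b > 1 and real x, I(b, 2x) := (2/π) ∫₀¹ cos(2x · arcsin(t/b)) / √(1 - t²) dt equals 1 + ∑_{n=1}^∞ (1/(b^{2n} n!²)) ∏_{j=0}^{n-1} (j² - x²), i.e. I(b,2x) = ₂F₁(-x, x; 1; b^{-2}). -/

import Mathlib

/-!
Substituting `t = sin θ` turns the integral into `(2/π) ∫₀^{π/2} cos (2x arcsin (sin θ / b)) dθ`.
The power series `T z = ∑ aₙ zⁿ` with `aₙ = 4ⁿ ∏_{j<n} (j² - x²) / (2n)!` has radius at least
one and solves the hypergeometric equation `z(1-z)T'' + (1/2 - z)T' + x²T = 0`. Hence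
`H θ = T (sin² θ)` solves `H'' = -4x² H` with `H 0 = 1`, `H' 0 = 0`, and the energy
`D'² + 4x² D²` of `D = H - cos (2x ·)` is constant, hence zero: `cos (2x arcsin u) = T u²`.
Integrating this expansion termwise against Wallis' integrals
`∫₀^{π/2} sin^{2n} = (π/2) (2n)! / (4ⁿ n!²)` gives the series, whose term `n = 0` is `1`.
-/

open Real Finset

noncomputable def powerSum (c : ℕ → ℝ) (z : ℝ) : ℝ := ∑' n, c n * z ^ n

def derivCoeff (c : ℕ → ℝ) (n : ℕ) : ℝ := (n + 1) * c (n + 1)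

def OneLeRadius (c : ℕ → ℝ) : Prop :=
  ∀ r : ℝ, 0 ≤ r → r < 1 → Summable fun n => |c n| * r ^ n

theorem powerSum_zero (c : ℕ → ℝ) : powerSum c 0 = c 0 := by
  rw [powerSum, tsum_eq_single 0 fun n hn => by simp [hn]]
  simp

namespace OneLeRadius

variable {c : ℕ → ℝ}

theorem summable_mul_pow (hc : OneLeRadius c) {z : ℝ} (hz : |z| < 1) :
    Summable fun n => c n * z ^ n :=
  .of_norm <| by simpa [abs_mul, abs_pow] using hc |z| (abs_nonneg z) hz

theorem hasSum (hc : OneLeRadius c) {z : ℝ} (hz : |z| < 1) :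
    HasSum (fun n => c n * z ^ n) (powerSum c z) :=
  (hc.summable_mul_pow hz).hasSum

theorem derivCoeff (hc : OneLeRadius c) : OneLeRadius (derivCoeff c) := by
  intro r hr0 hr1
  obtain ⟨s, hrs, hs1⟩ := exists_between hr1
  have hs0 : 0 < s := hr0.trans_lt hrs
  set q := r / s
  have hq0 : 0 ≤ q := div_nonneg hr0 hs0.le
  have hq1 : q < 1 := (div_lt_one hs0).2 hrs
  obtain ⟨K, hK⟩ := (tendsto_self_mul_const_pow_of_lt_one hq0 hq1).bddAbove_range
  have hshift : Summable fun n => |c (n + 1)| * s ^ (n + 1) :=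
    (summable_nat_add_iff 1).2 (hc s hs0.le hs1)
  refine .of_nonneg_of_le (fun n => by positivity) (fun n => ?_) (hshift.mul_left ((K + 1) / s))
  have hbound : ((n : ℝ) + 1) * q ^ n ≤ K + 1 := by
    have := hK ⟨n, rfl⟩
    nlinarith [pow_le_one₀ hq0 hq1.le (n := n)]
  have hr : r ^ n = q ^ n * s ^ (n + 1) / s := by
    rw [pow_succ, div_pow]; field_simp
  rw [_root_.derivCoeff, abs_mul, abs_of_nonneg (by positivity : (0 : ℝ) ≤ n + 1), hr]
  calc (n + 1) * |c (n + 1)| * (q ^ n * s ^ (n + 1) / s)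
      = ((n + 1) * q ^ n) / s * (|c (n + 1)| * s ^ (n + 1)) := by ring
    _ ≤ (K + 1) / s * (|c (n + 1)| * s ^ (n + 1)) := by gcongr

theorem hasDerivAt_powerSum (hc : OneLeRadius c) {z : ℝ} (hz : |z| < 1) :
    HasDerivAt (powerSum c) (powerSum (_root_.derivCoeff c) z) z := by
  obtain ⟨r, hzr, hr1⟩ := exists_between hz
  have hr0 : 0 ≤ r := (abs_nonneg z).trans hzr.le
  have habs (n : ℕ) : |(n : ℝ) + 1| = n + 1 := abs_of_pos n.cast_add_one_pos
  have hbound : Summable fun n => |c n| * n * r ^ (n - 1) := by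
    refine (summable_nat_add_iff 1).1 ?_
    simpa [_root_.derivCoeff, abs_mul, habs, mul_comm, mul_left_comm] using hc.derivCoeff r hr0 hr1
  have key := hasDerivAt_tsum_of_isPreconnected hbound isOpen_Ioo isPreconnected_Ioo
    (g := fun n y => c n * y ^ n) (g' := fun n y => c n * (n * y ^ (n - 1)))
    (fun n y _ => (hasDerivAt_pow n y).const_mul (c n)) (fun n y hy => ?_)
    (y₀ := 0) (by constructor <;> linarith [abs_nonneg z]) (hc.summable_mul_pow (by simp))
    (abs_lt.1 hzr)
  · refine key.congr_deriv ?_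
    have hshift (n : ℕ) : c (n + 1) * ((n + 1 : ℕ) * z ^ (n + 1 - 1)) =
        _root_.derivCoeff c n * z ^ n := by
      push_cast [_root_.derivCoeff, add_tsub_cancel_right]
      ring
    rw [tsum_eq_zero_add' ?_]
    · simp only [hshift]
      simp [powerSum]
    · simpa only [hshift] using hc.derivCoeff.summable_mul_pow hz
  · have hyr : |y| ≤ r := abs_le.2 ⟨hy.1.le, hy.2.le⟩
    simp only [norm_mul, Real.norm_eq_abs, abs_pow, Nat.abs_cast, ← mul_assoc]
    gcongr

theorem hasDerivAt_powerSum_sin_sq (hc : OneLeRadius c) {θ : ℝ}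
    (hθ : sin θ ^ 2 < 1) :
    HasDerivAt (fun θ => powerSum c (sin θ ^ 2))
      (powerSum (_root_.derivCoeff c) (sin θ ^ 2) * (2 * sin θ * cos θ)) θ :=
  ((hc.hasDerivAt_powerSum (by rwa [abs_of_nonneg (sq_nonneg _)])).comp θ
    ((hasDerivAt_sin θ).pow 2)).congr_deriv (by simp)

end OneLeRadius

theorem hasSum_mul_pow_of_hasSum_succ {f : ℕ → ℝ} {z s : ℝ}
    (h : HasSum (fun n => f (n + 1) * z ^ n) s) :
    HasSum (fun n => f n * z ^ n) (f 0 + z * s) := by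
  refine (hasSum_nat_add_iff' 1).1 ?_
  simpa [pow_succ, mul_comm, mul_left_comm, mul_assoc] using h.mul_left z

theorem eqOn_cos_of_hasDerivAt {s : Set ℝ} (hs : IsOpen s) (hs' : IsPreconnected s) (h0 : 0 ∈ s)
    {k : ℝ} {f f' : ℝ → ℝ} (hf : ∀ θ ∈ s, HasDerivAt f (f' θ) θ)
    (hf' : ∀ θ ∈ s, HasDerivAt f' (-k ^ 2 * f θ) θ) (hf0 : f 0 = 1) (hf'0 : f' 0 = 0) :
    Set.EqOn f (fun θ => cos (k * θ)) s := by
  have hconst : ∀ g : ℝ → ℝ, (∀ θ ∈ s, HasDerivAt g 0 θ) → ∀ θ ∈ s, g θ = g 0 :=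
    fun g hg θ hθ => hs.is_const_of_deriv_eq_zero hs'
      (fun y hy => (hg y hy).differentiableAt.differentiableWithinAt)
      (fun y hy => (hg y hy).deriv) hθ h0
  set D := fun θ => f θ - cos (k * θ)
  set D' := fun θ => f' θ + k * sin (k * θ)
  have hD : ∀ θ ∈ s, HasDerivAt D (D' θ) θ := fun θ hθ =>
    ((hf θ hθ).sub ((hasDerivAt_id θ).const_mul k).cos).congr_deriv (by simp only [id, D']; ring)
  have hD' : ∀ θ ∈ s, HasDerivAt D' (-k ^ 2 * D θ) θ := fun θ hθ =>
    ((hf' θ hθ).add (((hasDerivAt_id θ).const_mul k).sin.const_mul k)).congr_deriv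
      (by simp only [id, D]; ring)
  have hE := hconst (fun θ => D' θ ^ 2 + k ^ 2 * D θ ^ 2) fun θ hθ =>
    (((hD' θ hθ).pow 2).add (((hD θ hθ).pow 2).const_mul (k ^ 2))).congr_deriv
      (by simp only [Nat.add_one_sub_one, pow_one]; ring)
  have hD'0 : ∀ θ ∈ s, D' θ = 0 := fun θ hθ => by
    have hEθ := hE θ hθ
    simp only [hf0, hf'0, mul_zero, sin_zero, cos_zero, add_zero, sub_self, ne_eq,
      OfNat.ofNat_ne_zero, not_false_eq_true, zero_pow, D, D'] at hEθ
    nlinarith [sq_nonneg (D' θ), sq_nonneg (k * D θ)]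
  intro θ hθ
  have hDθ := hconst D (fun θ hθ => hD'0 θ hθ ▸ hD θ hθ) θ hθ
  simp only [hf0, mul_zero, cos_zero, sub_self, D] at hDθ
  linarith

theorem integral_div_sqrt_one_sub_sq (F : ℝ → ℝ) :
    ∫ t in (0 : ℝ)..1, F t / √(1 - t ^ 2) = ∫ θ in (0 : ℝ)..(π / 2), F (sin θ) := by
  have hpi : 0 ≤ π / 2 := by positivity
  have himage : sin '' Set.Icc 0 (π / 2) = Set.Icc 0 1 := by
    refine Set.Subset.antisymm ?_ fun t ht => ?_
    · rintro _ ⟨θ, hθ, rfl⟩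
      exact ⟨sin_nonneg_of_nonneg_of_le_pi hθ.1 (by linarith [hθ.2, pi_pos]), sin_le_one θ⟩
    · exact ⟨arcsin t, ⟨arcsin_nonneg.2 ht.1, arcsin_le_pi_div_two t⟩,
        sin_arcsin (by linarith [ht.1]) ht.2⟩
  have hsubst := MeasureTheory.integral_image_eq_integral_abs_deriv_smul
    (measurableSet_Icc (a := 0) (b := π / 2))
    (fun θ _ => (hasDerivAt_sin θ).hasDerivWithinAt)
    (injOn_sin.mono (Set.Icc_subset_Icc (by linarith) le_rfl))
    (fun t => F t / √(1 - t ^ 2))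
  rw [himage] at hsubst
  rw [intervalIntegral.integral_of_le zero_le_one, intervalIntegral.integral_of_le hpi,
    ← MeasureTheory.integral_Icc_eq_integral_Ioc, hsubst,
    MeasureTheory.integral_Icc_eq_integral_Ioo, MeasureTheory.integral_Ioc_eq_integral_Ioo]
  refine MeasureTheory.setIntegral_congr_fun measurableSet_Ioo fun θ hθ => ?_
  have hcos : 0 < cos θ := cos_pos_of_mem_Ioo ⟨by linarith [hθ.1, pi_pos], hθ.2⟩
  rw [← cos_sq', sqrt_sq hcos.le, abs_of_pos hcos, smul_eq_mul, mul_div_cancel₀ _ hcos.ne']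

theorem integral_sin_pow_even_zero_pi_div_two (n : ℕ) :
    ∫ θ in (0 : ℝ)..(π / 2), sin θ ^ (2 * n) =
      π / 2 * (2 * n).factorial / (4 ^ n * (n.factorial : ℝ) ^ 2) := by
  induction n with
  | zero => simp
  | succ n ih =>
    have h : 2 * (n + 1) = 2 * n + 1 + 1 := by ring
    rw [h, integral_sin_pow, ← h, ih]
    simp only [sin_zero, cos_pi_div_two]
    rw [h, Nat.factorial_succ, Nat.factorial_succ, Nat.factorial_succ]
    push_cast
    field_simp
    ring

noncomputable def cosArcsinCoeff (x : ℝ) (n : ℕ) : ℝ :=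
  4 ^ n * (∏ j ∈ range n, ((j : ℝ) ^ 2 - x ^ 2)) / (2 * n).factorial

namespace cosArcsinCoeff

variable (x : ℝ)

@[simp] theorem zero : cosArcsinCoeff x 0 = 1 := by simp [cosArcsinCoeff]

theorem succ (n : ℕ) :
    ((n : ℝ) + 1) * (2 * n + 1) * cosArcsinCoeff x (n + 1) =
      2 * ((n : ℝ) ^ 2 - x ^ 2) * cosArcsinCoeff x n := by
  have h : 2 * (n + 1) = 2 * n + 1 + 1 := by ring
  rw [cosArcsinCoeff, cosArcsinCoeff, h, Nat.factorial_succ, Nat.factorial_succ, prod_range_succ]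
  push_cast
  field_simp
  ring

theorem abs_succ_le {n : ℕ} (hn : x ^ 2 ≤ n) :
    |cosArcsinCoeff x (n + 1)| ≤ |cosArcsinCoeff x n| := by
  have hpos : (0 : ℝ) < ((n : ℝ) + 1) * (2 * n + 1) := by positivity
  have hratio : cosArcsinCoeff x (n + 1) =
      2 * ((n : ℝ) ^ 2 - x ^ 2) / (((n : ℝ) + 1) * (2 * n + 1)) * cosArcsinCoeff x n := by
    rw [div_mul_eq_mul_div, eq_div_iff hpos.ne', ← succ]
    ring
  rw [hratio, abs_mul]
  refine mul_le_of_le_one_left (abs_nonneg _) ?_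
  rw [abs_div, abs_of_pos hpos, div_le_one hpos, abs_le]
  constructor <;> nlinarith [sq_nonneg x]

theorem oneLeRadius : OneLeRadius (cosArcsinCoeff x) := by
  intro r hr0 hr1
  refine summable_of_ratio_norm_eventually_le hr1 ?_
  filter_upwards [Filter.eventually_ge_atTop ⌈x ^ 2⌉₊] with n hn
  simp only [norm_mul, Real.norm_eq_abs, abs_abs, abs_pow, abs_of_nonneg hr0, pow_succ]
  have hle := abs_succ_le x (Nat.ceil_le.1 hn)
  calc |cosArcsinCoeff x (n + 1)| * (r ^ n * r) ≤ |cosArcsinCoeff x n| * (r ^ n * r) := by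
        gcongr
    _ = r * (|cosArcsinCoeff x n| * r ^ n) := by ring

theorem hypergeometric_ode {z : ℝ} (hz : |z| < 1) :
    z * (1 - z) * powerSum (derivCoeff (derivCoeff (cosArcsinCoeff x))) z +
      (1 / 2 - z) * powerSum (derivCoeff (cosArcsinCoeff x)) z +
      x ^ 2 * powerSum (cosArcsinCoeff x) z = 0 := by
  have ha := oneLeRadius x
  set a := cosArcsinCoeff x
  set S₁ := powerSum (derivCoeff a) z
  set S₂ := powerSum (derivCoeff (derivCoeff a)) z
  have h₁ : HasSum (fun n => derivCoeff a n * z ^ n) S₁ := ha.derivCoeff.hasSum hz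
  have hz₂ : HasSum (fun n : ℕ => n * derivCoeff a n * z ^ n) (z * S₂) := by
    simpa using hasSum_mul_pow_of_hasSum_succ (f := fun n : ℕ => n * derivCoeff a n)
      (by simpa [derivCoeff] using ha.derivCoeff.derivCoeff.hasSum hz)
  have hA : HasSum (fun n : ℕ => ((n : ℝ) ^ 2 - x ^ 2) * a n * z ^ n)
      (z * S₂ + 1 / 2 * S₁) := by
    convert hz₂.add (h₁.mul_left (1 / 2)) using 2 with n
    simp only [derivCoeff]
    linear_combination -(z ^ n / 2) * succ x n
  have hB : HasSum (fun n : ℕ => (n : ℝ) ^ 2 * a n * z ^ n) (z * (z * S₂ + S₁)) := by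
    have h := hasSum_mul_pow_of_hasSum_succ (f := fun n : ℕ => (n : ℝ) ^ 2 * a n)
      (by convert hz₂.add h₁ using 2 with n; push_cast [derivCoeff]; ring)
    simpa using h
  have h := (hA.sub hB).add ((ha.hasSum hz).mul_left (x ^ 2))
  linear_combination h.unique (hasSum_zero.congr_fun fun n => by ring)

end cosArcsinCoeff

theorem hasSum_cos_mul_arcsin (x : ℝ) {u : ℝ} (hu : |u| < 1) :
    HasSum (fun n => cosArcsinCoeff x n * (u ^ 2) ^ n) (cos (2 * x * arcsin u)) := by
  have ha := cosArcsinCoeff.oneLeRadius x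
  have hsin : ∀ θ ∈ Set.Ioo (-(π / 2)) (π / 2), sin θ ^ 2 < 1 := fun θ hθ => by
    nlinarith [sin_sq_add_cos_sq θ, cos_pos_of_mem_Ioo hθ]
  have hcos := eqOn_cos_of_hasDerivAt isOpen_Ioo isPreconnected_Ioo
    (by constructor <;> linarith [pi_pos]) (k := 2 * x)
    (f := fun θ => powerSum (cosArcsinCoeff x) (sin θ ^ 2))
    (f' := fun θ => powerSum (derivCoeff (cosArcsinCoeff x)) (sin θ ^ 2) * (2 * sin θ * cos θ))
    (fun θ hθ => ha.hasDerivAt_powerSum_sin_sq (hsin θ hθ))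
    (fun θ hθ => ((ha.derivCoeff.hasDerivAt_powerSum_sin_sq (hsin θ hθ)).mul
      (((hasDerivAt_sin θ).const_mul 2).mul (hasDerivAt_cos θ))).congr_deriv (by
        simp only [Pi.mul_apply]
        -- `H'' = 4 sin² cos² T'' + 2 (cos² - sin²) T'` at `sin² θ`, and `cos² = 1 - sin²`
        linear_combination 4 * cosArcsinCoeff.hypergeometric_ode x
          (z := sin θ ^ 2) (by rw [abs_of_nonneg (sq_nonneg _)]; exact hsin θ hθ) +
          (4 * sin θ ^ 2 * powerSum (derivCoeff (derivCoeff (cosArcsinCoeff x))) (sin θ ^ 2) +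
            2 * powerSum (derivCoeff (cosArcsinCoeff x)) (sin θ ^ 2)) * sin_sq_add_cos_sq θ))
    (by simp [powerSum_zero]) (by simp)
  have harcsin : arcsin u ∈ Set.Ioo (-(π / 2)) (π / 2) :=
    ⟨neg_pi_div_two_lt_arcsin.2 (abs_lt.1 hu).1, arcsin_lt_pi_div_two.2 (abs_lt.1 hu).2⟩
  have hval := hcos harcsin
  simp only [sin_arcsin (abs_le.1 hu.le).1 (abs_le.1 hu.le).2] at hval
  rw [← hval]
  exact ha.hasSum (by rw [abs_pow]; exact pow_lt_one₀ (abs_nonneg u) hu two_ne_zero)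

theorem hasSum_integral_cos_mul_arcsin_sin_div {b : ℝ} (hb : 1 < b) (x : ℝ) :
    HasSum (fun n : ℕ =>
        (∏ j ∈ range n, ((j : ℝ) ^ 2 - x ^ 2)) / (b ^ (2 * n) * (n.factorial : ℝ) ^ 2))
      ((2 / π) * ∫ θ in (0 : ℝ)..(π / 2), cos (2 * x * arcsin (sin θ / b))) := by
  have ha := cosArcsinCoeff.oneLeRadius x
  have hsin (θ : ℝ) : (sin θ / b) ^ 2 ≤ b⁻¹ ^ 2 := by
    rw [div_eq_mul_inv, mul_pow]
    exact mul_le_of_le_one_left (by positivity) (sin_sq_le_one θ)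
  have hr : b⁻¹ ^ 2 < 1 := pow_lt_one₀ (by positivity) (inv_lt_one_of_one_lt₀ hb) two_ne_zero
  have hsum := intervalIntegral.hasSum_integral_of_dominated_convergence
    (a := 0) (b := π / 2) (μ := MeasureTheory.volume)
    (F := fun n θ => cosArcsinCoeff x n * ((sin θ / b) ^ 2) ^ n)
    (fun n _ => |cosArcsinCoeff x n| * (b⁻¹ ^ 2) ^ n)
    (fun n => (by fun_prop : Continuous _).aestronglyMeasurable)
    (fun n => .of_forall fun θ _ => by
      simp only [norm_mul, norm_pow, Real.norm_eq_abs, sq_abs]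
      exact mul_le_mul_of_nonneg_left (pow_le_pow_left₀ (sq_nonneg _) (hsin θ) n) (abs_nonneg _))
    (.of_forall fun _ _ => ha _ (by positivity) hr)
    intervalIntegrable_const
    (.of_forall fun θ _ => hasSum_cos_mul_arcsin x (by
      rw [← sq_lt_one_iff_abs_lt_one]; exact (hsin θ).trans_lt hr))
  refine (hsum.mul_left (2 / π)).congr_fun fun n => ?_
  have hpow (θ : ℝ) : ((sin θ / b) ^ 2) ^ n = sin θ ^ (2 * n) / b ^ (2 * n) := by
    rw [← pow_mul, div_pow]
  simp only [hpow, mul_div_assoc', ← mul_div_right_comm, intervalIntegral.integral_div,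
    intervalIntegral.integral_const_mul, integral_sin_pow_even_zero_pi_div_two, cosArcsinCoeff]
  field_simp

theorem I_b_two_x_series (b : ℝ) (hb : 1 < b) (x : ℝ) :
    HasSum
      (fun n : ℕ =>
        (∏ j ∈ Finset.range (n + 1), ((j : ℝ) ^ 2 - x ^ 2)) /
          (b ^ (2 * (n + 1)) * ((n + 1).factorial : ℝ) ^ 2))
      (((2 / π) * ∫ t in (0:ℝ)..1,
          Real.cos (2 * x * Real.arcsin (t / b)) / Real.sqrt (1 - t ^ 2)) - 1) := by
  rw [integral_div_sqrt_one_sub_sq fun t => cos (2 * x * arcsin (t / b))]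
  simpa using (hasSum_nat_add_iff' 1).2 (hasSum_integral_cos_mul_arcsin_sin_div hb x)
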